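/- Let (X,Y) be a BLM pair with parameter θ > 0 and joint survival function H̄, and assume the marginal survival functions F̄, Ḡ are strictly positive on [0,∞). Then H̄ is RR₂ on (0,∞)×(0,∞) if and only if both marginals are DFR (i.e., x ↦ −log F̄(x) and x ↦ −log Ḡ(x) are concave on [0,∞)) and F̄(x)·Ḡ(x) ≥ e^{−θx} for all x ≥ 0. -/

import Mathlib

open MeasureTheory Real Set

/-- Marginal survival function `x ↦ P(X > x)`. -/
def survival {Ω : Type*} [MeasurableSpace Ω] (μ : Measure Ω) (X : Ω → ℝ) (x : ℝ) : ℝ :=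
  (μ {ω | x < X ω}).toReal

/-- Joint survival function `(x,y) ↦ P(X > x, Y > y)`. -/
def jointSurvival {Ω : Type*} [MeasurableSpace Ω] (μ : Measure Ω) (X Y : Ω → ℝ) (x y : ℝ) : ℝ :=
  (μ {ω | x < X ω ∧ y < Y ω}).toReal

/-- `(X,Y)` is a BLM pair with parameter `θ > 0`. -/
def IsBLM {Ω : Type*} [MeasurableSpace Ω] (μ : Measure Ω) (X Y : Ω → ℝ) (θ : ℝ) : Prop :=
  0 < θ ∧ μ {ω | 0 < X ω} = 1 ∧ μ {ω | 0 < Y ω} = 1 ∧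
  (∀ x y : ℝ, 0 ≤ y → y ≤ x →
    jointSurvival μ X Y x y = Real.exp (-θ * y) * survival μ X (x - y)) ∧
  (∀ x y : ℝ, 0 ≤ x → x ≤ y →
    jointSurvival μ X Y x y = Real.exp (-θ * x) * survival μ Y (y - x))

/-- `K` is reverse regular of order two on `S × T`. -/
def RR2 (K : ℝ → ℝ → ℝ) (S T : Set ℝ) : Prop :=
  ∀ x₁ ∈ S, ∀ x₂ ∈ S, ∀ y₁ ∈ T, ∀ y₂ ∈ T, x₁ < x₂ → y₁ < y₂ →
    K x₁ y₁ * K x₂ y₂ ≤ K x₁ y₂ * K x₂ y₁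

/-!
On the positive quadrant `H̄(x, y) = e^{-θx/2} e^{-θy/2} e^{ℓ(x - y)}` with
`ℓ(u) = θ|u|/2 + log F̄(u)` for `u ≥ 0` and `ℓ(u) = θ|u|/2 + log Ḡ(-u)` for `u < 0`. The product
factors cancel from the RR₂ inequality, which thus says that `ℓ` is Wright convex on `ℝ`:
`ℓ(b) + ℓ(c) ≤ ℓ(a) + ℓ(b + c - a)` whenever `a ≤ b, c`.

On `[0, ∞)` Wright convexity of `ℓ` is that of `log F̄`; this gives midpoint convexity, hence
convexity at dyadic weights, and since `log F̄` is antitone, approximating a weight from below by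
dyadics gives the rest. Reflecting `u ↦ -u` does the same for `Ḡ`, and `a = -x, b = c = 0` gives
`F̄(x) Ḡ(x) ≥ e^{-θx}`. Conversely, the DFR assumptions make `ℓ` convex on both half-lines, and the
product condition `ℓ(-x) + ℓ(x) ≥ 2 ℓ(0)` puts `ℓ(0)` below every chord across `0`, which glues the
two halves into a convex function on `ℝ`; convex functions are Wright convex.
-/

def WrightConvexOn (s : Set ℝ) (f : ℝ → ℝ) : Prop :=
  ∀ a ∈ s, ∀ b c, a ≤ b → a ≤ c → b + c - a ∈ s → f b + f c ≤ f a + f (b + c - a)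

namespace WrightConvexOn

variable {s : Set ℝ} {f : ℝ → ℝ}

lemma comp_neg (h : WrightConvexOn s f) : WrightConvexOn (-s) (fun x => f (-x)) := by
  intro a ha b c hab hac hd
  have := h (-(b + c - a)) hd (-b) (-c) (by linarith) (by linarith)
    (by convert mem_neg.mp ha using 1; ring)
  rw [add_comm (f (-a))]
  convert this using 3
  ring

lemma midpoint_le (h : WrightConvexOn s f) {x y : ℝ} (hx : x ∈ s) (hy : y ∈ s) :
    f ((x + y) / 2) ≤ (f x + f y) / 2 := by
  wlog hxy : x ≤ y generalizing x y
  · rw [add_comm x, add_comm (f x)]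
    exact this hy hx (le_of_not_ge hxy)
  have := h x hx ((x + y) / 2) ((x + y) / 2) (by linarith) (by linarith)
    (by convert hy using 1; ring)
  rw [show (x + y) / 2 + (x + y) / 2 - x = y by ring] at this
  linarith

lemma le_dyadic (h : WrightConvexOn s f) (hs : Convex ℝ s) {x z : ℝ} (hx : x ∈ s)
    (hz : z ∈ s) (n : ℕ) {k : ℕ} (hk : k ≤ 2 ^ n) :
    f (x + k / 2 ^ n * (z - x)) ≤ f x + k / 2 ^ n * (f z - f x) := by
  induction n generalizing k with
  | zero => interval_cases k <;> simp
  | succ n ih =>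
    have hmem : ∀ {i : ℕ}, i ≤ 2 ^ n → x + i / 2 ^ n * (z - x) ∈ s := fun hi =>
      hs.add_smul_sub_mem hx hz ⟨by positivity, div_le_one_of_le₀ (by exact_mod_cast hi)
        (by positivity)⟩
    -- Split `k = i + j` with `i, j ≤ 2 ^ n`: the level-`n+1` point is the midpoint of two
    -- level-`n` points.
    obtain ⟨i, j, hi, hj, rfl⟩ : ∃ i j, i ≤ 2 ^ n ∧ j ≤ 2 ^ n ∧ k = i + j :=
      ⟨k / 2, k - k / 2, by rw [pow_succ] at hk; omega, by rw [pow_succ] at hk; omega, by omega⟩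
    calc f (x + ↑(i + j) / 2 ^ (n + 1) * (z - x))
        = f (((x + i / 2 ^ n * (z - x)) + (x + j / 2 ^ n * (z - x))) / 2) := by
          congr 1; push_cast; ring
      _ ≤ (f (x + i / 2 ^ n * (z - x)) + f (x + j / 2 ^ n * (z - x))) / 2 :=
          h.midpoint_le (hmem hi) (hmem hj)
      _ ≤ ((f x + i / 2 ^ n * (f z - f x)) + (f x + j / 2 ^ n * (f z - f x))) / 2 := by
          linarith [ih hi, ih hj]
      _ = f x + ↑(i + j) / 2 ^ (n + 1) * (f z - f x) := by push_cast; ring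

open Filter in
lemma convexOn_of_antitoneOn (h : WrightConvexOn s f) (hs : Convex ℝ s) (hf : AntitoneOn f s) :
    ConvexOn ℝ s f := by
  have key : ∀ x ∈ s, ∀ z ∈ s, x ≤ z → ∀ t ∈ Icc (0 : ℝ) 1,
      f (x + t * (z - x)) ≤ f x + t * (f z - f x) := by
    intro x hx z hz hxz t ht
    have hmem : ∀ {r : ℝ}, r ∈ Icc (0 : ℝ) 1 → x + r * (z - x) ∈ s :=
      hs.add_smul_sub_mem hx hz
    -- Approximate `t` from below by `k / 2 ^ n`; as `f` is antitone, the error has a sign.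
    have approx : ∀ n : ℕ,
        f (x + t * (z - x)) ≤ f x + t * (f z - f x) + (1 / 2) ^ n * (f x - f z) := by
      intro n
      have h2n : (0 : ℝ) < 2 ^ n := by positivity
      set k := ⌊t * 2 ^ n⌋₊
      have hk : k ≤ 2 ^ n := Nat.floor_le_of_le (by push_cast; nlinarith [ht.2])
      have hkt : (k : ℝ) / 2 ^ n ≤ t :=
        (div_le_iff₀ h2n).2 (Nat.floor_le (by nlinarith [ht.1]))
      have htk : t - k / 2 ^ n ≤ 1 / 2 ^ n := by
        have : t * 2 ^ n - 1 ≤ k := by linarith [Nat.lt_floor_add_one (t * 2 ^ n)]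
        calc t - k / 2 ^ n = (t * 2 ^ n - k) / 2 ^ n := by field_simp
          _ ≤ 1 / 2 ^ n := by gcongr; linarith
      have hkmem : (k : ℝ) / 2 ^ n ∈ Icc (0 : ℝ) 1 := ⟨by positivity, hkt.trans ht.2⟩
      have hfxz : f z ≤ f x := hf hx hz hxz
      calc f (x + t * (z - x)) ≤ f (x + k / 2 ^ n * (z - x)) :=
            hf (hmem hkmem) (hmem ht) (by nlinarith)
        _ ≤ f x + k / 2 ^ n * (f z - f x) := h.le_dyadic hs hx hz n hk
        _ ≤ f x + t * (f z - f x) + (1 / 2) ^ n * (f x - f z) := by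
            have := mul_le_mul_of_nonneg_right htk (sub_nonneg.2 hfxz)
            rw [one_div_pow]; linarith
    have hlim : Tendsto (fun n : ℕ => f x + t * (f z - f x) + (1 / 2) ^ n * (f x - f z)) atTop
        (nhds (f x + t * (f z - f x))) := by
      simpa using tendsto_const_nhds.add
        ((tendsto_pow_atTop_nhds_zero_of_lt_one (r := (1 / 2 : ℝ)) (by norm_num)
          (by norm_num)).mul_const (f x - f z))
    exact ge_of_tendsto' hlim approx
  refine ⟨hs, fun x hx y hy a b ha hb hab => ?_⟩
  simp only [smul_eq_mul]
  rcases le_total x y with hxy | hyx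
  · have := key x hx y hy hxy b ⟨hb, by linarith⟩
    rw [show a * x + b * y = x + b * (y - x) by linear_combination x * hab]
    linear_combination this - f x * hab
  · have := key y hy x hx hyx a ⟨ha, by linarith⟩
    rw [show a * x + b * y = y + a * (x - y) by linear_combination y * hab]
    linear_combination this - f y * hab

end WrightConvexOn

section Convex

variable {s : Set ℝ} {f : ℝ → ℝ}

lemma ConvexOn.le_chord (hf : ConvexOn ℝ s f) {x y z : ℝ} (hx : x ∈ s) (hz : z ∈ s)
    (hxy : x ≤ y) (hyz : y ≤ z) : (z - x) * f y ≤ (z - y) * f x + (y - x) * f z := by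
  rcases hxy.eq_or_lt with rfl | hxy
  · linarith
  rcases hyz.eq_or_lt with rfl | hyz
  · linarith
  exact hf.secant_mono_aux1 hx hz hxy hyz

lemma ConvexOn.wrightConvexOn (hf : ConvexOn ℝ s f) : WrightConvexOn s f := by
  intro a ha b c hab hac hd
  set d := b + c - a
  rcases (show a ≤ d by linarith).eq_or_lt with had | had
  · obtain rfl : b = a := by linarith
    obtain rfl : c = b := by linarith
    rw [← had]
  have hb := hf.le_chord ha hd hab (by linarith)
  have hc := hf.le_chord ha hd hac (by linarith)
  refine le_of_mul_le_mul_left ?_ (sub_pos.2 had)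
  linear_combination hb + hc

lemma ConvexOn.comp_neg (hf : ConvexOn ℝ s f) : ConvexOn ℝ (-s) (fun x => f (-x)) := by
  refine ⟨hf.1.neg, fun x hx y hy a b ha hb hab => ?_⟩
  have := hf.2 hx hy ha hb hab
  simp only [smul_eq_mul] at this ⊢
  rwa [show -(a * x + b * y) = a * -x + b * -y by ring]

end Convex

section Gluing

variable {f : ℝ → ℝ}

lemma le_chord_zero_of_convexOn_Iic_Ici (hl : ConvexOn ℝ (Iic 0) f) (hr : ConvexOn ℝ (Ici 0) f)
    (hsym : ∀ x, 0 < x → 2 * f 0 ≤ f (-x) + f x) {x z : ℝ} (hx : x < 0) (hz : 0 < z) :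
    (z - x) * f 0 ≤ z * f x - x * f z := by
  set m := min (-x) z
  have hm : 0 < m := lt_min (by linarith) hz
  have hleft := hl.le_chord (mem_Iic.2 hx.le) (mem_Iic.2 le_rfl)
    (le_neg.1 (min_le_left _ _)) (neg_nonpos.2 hm.le)
  have hright := hr.le_chord (mem_Ici.2 le_rfl) (mem_Ici.2 hz.le) hm.le (min_le_right _ _)
  refine le_of_mul_le_mul_left ?_ hm
  linarith [mul_le_mul_of_nonneg_left hleft hz.le,
    mul_le_mul_of_nonneg_left hright (neg_nonneg.2 hx.le),
    mul_le_mul_of_nonneg_left (hsym m hm) (mul_nonneg hz.le (neg_nonneg.2 hx.le))]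

lemma le_chord_of_convexOn_Iic_Ici (hl : ConvexOn ℝ (Iic 0) f) (hr : ConvexOn ℝ (Ici 0) f)
    (hsym : ∀ x, 0 < x → 2 * f 0 ≤ f (-x) + f x) {x y z : ℝ} (hx : x < 0) (hy : 0 ≤ y)
    (hyz : y < z) : (z - x) * f y ≤ (z - y) * f x + (y - x) * f z := by
  have hcross := le_chord_zero_of_convexOn_Iic_Ici hl hr hsym hx (hy.trans_lt hyz)
  rcases hy.eq_or_lt with rfl | hy
  · linarith
  -- `f y` lies below the chord over `[0, z]`, whose left end lies below the chord over `[x, z]`.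
  have hright :=
    hr.le_chord (mem_Ici.2 le_rfl) (mem_Ici.2 (hy.le.trans hyz.le)) hy.le hyz.le
  refine le_of_mul_le_mul_left ?_ (hy.trans hyz)
  linarith [mul_le_mul_of_nonneg_left hright (by linarith : 0 ≤ z - x),
    mul_le_mul_of_nonneg_left hcross (by linarith : 0 ≤ z - y)]

lemma convexOn_univ_of_convexOn_Iic_Ici (hl : ConvexOn ℝ (Iic 0) f) (hr : ConvexOn ℝ (Ici 0) f)
    (hsym : ∀ x, 0 < x → 2 * f 0 ≤ f (-x) + f x) : ConvexOn ℝ univ f := by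
  refine convexOn_of_slope_mono_adjacent convex_univ fun {x y z} _ _ hxy hyz => ?_
  rw [div_le_div_iff₀ (by linarith) (by linarith)]
  suffices (z - x) * f y ≤ (z - y) * f x + (y - x) * f z by linear_combination this
  rcases le_or_gt 0 x with hx | hx
  · exact hr.le_chord hx (hx.trans (hxy.trans hyz).le) hxy.le hyz.le
  rcases le_or_gt z 0 with hz | hz
  · exact hl.le_chord hx.le hz hxy.le hyz.le
  rcases le_or_gt 0 y with hy | hy
  · exact le_chord_of_convexOn_Iic_Ici hl hr hsym hx hy hyz
  · have := le_chord_of_convexOn_Iic_Ici (f := fun x => f (-x))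
      (by simpa using hr.comp_neg) (by simpa using hl.comp_neg)
      (fun x hx => by simpa [add_comm] using hsym x hx)
      (neg_neg_of_pos hz) (neg_nonneg.2 hy.le) (neg_lt_neg hxy)
    simp only [neg_neg] at this
    linarith

end Gluing

lemma rr2_Ioi_iff_wrightConvexOn {K : ℝ → ℝ → ℝ} {α β ψ : ℝ → ℝ}
    (hK : ∀ x, 0 < x → ∀ y, 0 < y → K x y = exp (α x + β y + ψ (x - y))) :
    RR2 K (Ioi 0) (Ioi 0) ↔ WrightConvexOn univ ψ := by
  have key : ∀ {x₁ x₂ y₁ y₂ : ℝ}, 0 < x₁ → 0 < x₂ → 0 < y₁ → 0 < y₂ →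
      (K x₁ y₁ * K x₂ y₂ ≤ K x₁ y₂ * K x₂ y₁ ↔
        ψ (x₁ - y₁) + ψ (x₂ - y₂) ≤ ψ (x₁ - y₂) + ψ (x₂ - y₁)) := by
    intro x₁ x₂ y₁ y₂ hx₁ hx₂ hy₁ hy₂
    rw [hK x₁ hx₁ y₁ hy₁, hK x₂ hx₂ y₂ hy₂, hK x₁ hx₁ y₂ hy₂, hK x₂ hx₂ y₁ hy₁, ← exp_add,
      ← exp_add, exp_le_exp]
    constructor <;> intro h <;> linarith
  constructor
  · intro h a _ b c hab hac _
    rcases hab.eq_or_lt with rfl | hab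
    · simp
    rcases hac.eq_or_lt with rfl | hac
    · simp [add_comm]
    -- Realize `a, b, c, b + c - a` as `x₁ - y₂, x₁ - y₁, x₂ - y₂, x₂ - y₁` inside the quadrant.
    set M := |a| + |b| + |c| + 1
    have hx₁ : 0 < a + M := by linarith [neg_abs_le a, abs_nonneg b, abs_nonneg c]
    have hx₂ : 0 < c + M := by linarith [neg_abs_le c, abs_nonneg a, abs_nonneg b]
    have hy₁ : 0 < a - b + M := by linarith [neg_abs_le a, le_abs_self b, abs_nonneg c]
    have hy₂ : 0 < M := by positivity
    have := (key hx₁ hx₂ hy₁ hy₂).1 (h _ hx₁ _ hx₂ _ hy₁ _ hy₂ (by linarith) (by linarith))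
    convert this using 3 <;> ring
  · intro h x₁ hx₁ x₂ hx₂ y₁ hy₁ y₂ hy₂ hx hy
    rw [key hx₁ hx₂ hy₁ hy₂]
    convert h (x₁ - y₂) trivial (x₁ - y₁) (x₂ - y₂) (by linarith) (by linarith) trivial using 3
    ring

/-- Chosen so that the BLM joint survival function is
`H̄(x, y) = exp (-θ x / 2 - θ y / 2 + blmLogKernel θ F̄ Ḡ (x - y))`. -/
noncomputable def blmLogKernel (θ : ℝ) (F G : ℝ → ℝ) (u : ℝ) : ℝ :=
  θ * |u| / 2 + if 0 ≤ u then log (F u) else log (G (-u))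

section blmLogKernel

variable {θ : ℝ} {F G : ℝ → ℝ}

lemma blmLogKernel_of_nonneg {u : ℝ} (hu : 0 ≤ u) :
    blmLogKernel θ F G u = θ * u / 2 + log (F u) := by
  simp [blmLogKernel, abs_of_nonneg hu, hu]

lemma blmLogKernel_of_neg {u : ℝ} (hu : u < 0) :
    blmLogKernel θ F G u = -θ * u / 2 + log (G (-u)) := by
  simp [blmLogKernel, abs_of_neg hu, hu.not_ge]

lemma blmLogKernel_neg (h0 : F 0 = G 0) (u : ℝ) :
    blmLogKernel θ F G (-u) = blmLogKernel θ G F u := by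
  rcases lt_trichotomy u 0 with hu | rfl | hu
  · rw [blmLogKernel_of_nonneg (by linarith), blmLogKernel_of_neg hu]
    ring
  · simp [blmLogKernel, h0]
  · rw [blmLogKernel_of_neg (by linarith), blmLogKernel_of_nonneg hu.le, neg_neg]
    ring

lemma convexOn_Ici_blmLogKernel (hF : ConvexOn ℝ (Ici 0) (fun x => log (F x))) :
    ConvexOn ℝ (Ici 0) (blmLogKernel θ F G) :=
  (((θ / 2) • LinearMap.id).convexOn (convex_Ici 0)).add hF |>.congr fun u hu => by
    simp [blmLogKernel_of_nonneg (mem_Ici.1 hu)]; ring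

lemma convexOn_blmLogKernel (hF : ConvexOn ℝ (Ici 0) (fun x => log (F x)))
    (hG : ConvexOn ℝ (Ici 0) (fun x => log (G x))) (h0 : F 0 = G 0)
    (hsym : ∀ x, 0 < x →
      2 * blmLogKernel θ F G 0 ≤ blmLogKernel θ F G (-x) + blmLogKernel θ F G x) :
    ConvexOn ℝ univ (blmLogKernel θ F G) := by
  refine convexOn_univ_of_convexOn_Iic_Ici ?_ (convexOn_Ici_blmLogKernel hF) hsym
  have := (convexOn_Ici_blmLogKernel (θ := θ) (G := F) hG).comp_neg
  simpa [blmLogKernel_neg h0.symm] using this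

lemma convexOn_log_of_wrightConvexOn_blmLogKernel
    (h : WrightConvexOn univ (blmLogKernel θ F G)) (hpos : ∀ x, 0 ≤ x → 0 < F x)
    (hanti : AntitoneOn F (Ici 0)) :
    ConvexOn ℝ (Ici 0) (fun x => log (F x)) := by
  refine WrightConvexOn.convexOn_of_antitoneOn ?_ (convex_Ici 0)
    fun x hx y hy hxy => log_le_log (hpos y hy) (hanti hx hy hxy)
  intro a ha b c hab hac _
  have := h a trivial b c hab hac trivial
  rw [blmLogKernel_of_nonneg (ha.trans hab), blmLogKernel_of_nonneg (ha.trans hac),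
    blmLogKernel_of_nonneg ha, blmLogKernel_of_nonneg (by linarith [mem_Ici.1 ha])] at this
  linarith

lemma two_mul_blmLogKernel_zero_le_iff (hF0 : F 0 = 1) (hG0 : G 0 = 1) {x : ℝ} (hx : 0 ≤ x)
    (hFx : 0 < F x) (hGx : 0 < G x) :
    2 * blmLogKernel θ F G 0 ≤ blmLogKernel θ F G (-x) + blmLogKernel θ F G x ↔
      exp (-θ * x) ≤ F x * G x := by
  rw [blmLogKernel_neg (hF0.trans hG0.symm), blmLogKernel_of_nonneg le_rfl,
    blmLogKernel_of_nonneg hx, blmLogKernel_of_nonneg hx, hF0,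
    ← le_log_iff_exp_le (by positivity), log_mul hFx.ne' hGx.ne']
  constructor <;> intro h <;> simp at h ⊢ <;> linarith

end blmLogKernel

section Survival

variable {Ω : Type*} [MeasurableSpace Ω] {μ : Measure Ω} {X Y : Ω → ℝ} {θ : ℝ}

lemma survival_antitone [IsFiniteMeasure μ] : Antitone (survival μ X) := fun _ _ huv =>
  ENNReal.toReal_mono (measure_ne_top _ _) (measure_mono fun _ h => huv.trans_lt h)

lemma survival_zero (h : μ {ω | 0 < X ω} = 1) : survival μ X 0 = 1 := by
  simp [survival, h]

lemma IsBLM.jointSurvival_eq_exp (h : IsBLM μ X Y θ)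
    (hFpos : ∀ x, 0 ≤ x → 0 < survival μ X x) (hGpos : ∀ x, 0 ≤ x → 0 < survival μ Y x)
    (x : ℝ) (hx : 0 < x) (y : ℝ) (hy : 0 < y) :
    jointSurvival μ X Y x y = exp (-(θ / 2) * x + -(θ / 2) * y +
      blmLogKernel θ (survival μ X) (survival μ Y) (x - y)) := by
  obtain ⟨-, -, -, hH₁, hH₂⟩ := h
  rcases le_or_gt y x with hyx | hxy
  · rw [hH₁ x y hy.le hyx, blmLogKernel_of_nonneg (sub_nonneg.2 hyx),
      show -(θ / 2) * x + -(θ / 2) * y + (θ * (x - y) / 2 + log (survival μ X (x - y)))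
        = -θ * y + log (survival μ X (x - y)) by ring,
      exp_add, exp_log (hFpos _ (sub_nonneg.2 hyx))]
  · rw [hH₂ x y hx.le hxy.le, blmLogKernel_of_neg (sub_neg.2 hxy), neg_sub,
      show -(θ / 2) * x + -(θ / 2) * y + (-θ * (x - y) / 2 + log (survival μ Y (y - x)))
        = -θ * x + log (survival μ Y (y - x)) by ring,
      exp_add, exp_log (hGpos _ (sub_nonneg.2 hxy.le))]

end Survival

theorem blm_survival_rr2_iff_general {Ω : Type*} [MeasurableSpace Ω] (μ : Measure Ω)
    [IsProbabilityMeasure μ] (X Y : Ω → ℝ)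
    (θ : ℝ) (hBLM : IsBLM μ X Y θ)
    (hFpos : ∀ x : ℝ, 0 ≤ x → 0 < survival μ X x)
    (hGpos : ∀ x : ℝ, 0 ≤ x → 0 < survival μ Y x) :
    RR2 (jointSurvival μ X Y) (Ioi 0) (Ioi 0) ↔
      (ConcaveOn ℝ (Ici 0) (fun x => -Real.log (survival μ X x)) ∧
        ConcaveOn ℝ (Ici 0) (fun x => -Real.log (survival μ Y x)) ∧
        ∀ x : ℝ, 0 ≤ x → Real.exp (-θ * x) ≤ survival μ X x * survival μ Y x) := by
  have hF0 : survival μ X 0 = 1 := survival_zero hBLM.2.1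
  have hG0 : survival μ Y 0 = 1 := survival_zero hBLM.2.2.1
  have hsym := fun x hx =>
    two_mul_blmLogKernel_zero_le_iff (θ := θ) hF0 hG0 hx (hFpos x hx) (hGpos x hx)
  rw [rr2_Ioi_iff_wrightConvexOn (hBLM.jointSurvival_eq_exp hFpos hGpos)]
  constructor
  · intro h
    have hGF : WrightConvexOn univ (blmLogKernel θ (survival μ Y) (survival μ X)) := by
      simpa [blmLogKernel_neg (hF0.trans hG0.symm)] using h.comp_neg
    refine ⟨(convexOn_log_of_wrightConvexOn_blmLogKernel h hFpos
        (survival_antitone.antitoneOn _)).neg,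
      (convexOn_log_of_wrightConvexOn_blmLogKernel hGF hGpos
        (survival_antitone.antitoneOn _)).neg, fun x hx => (hsym x hx).1 ?_⟩
    have := h (-x) trivial 0 0 (by linarith) (by linarith) trivial
    rw [zero_add, zero_sub, neg_neg] at this
    linarith
  · rintro ⟨hF, hG, hprod⟩
    exact (convexOn_blmLogKernel (by simpa only [Pi.neg_def, neg_neg] using hF.neg)
      (by simpa only [Pi.neg_def, neg_neg] using hG.neg)
      (hF0.trans hG0.symm) fun x hx => (hsym x hx.le).2 (hprod x hx.le)).wrightConvexOn

theorem blm_survival_rr2_iff {Ω : Type*} [MeasurableSpace Ω] (μ : Measure Ω)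
    [IsProbabilityMeasure μ] (X Y : Ω → ℝ) (hX : Measurable X) (hY : Measurable Y)
    (θ : ℝ) (hBLM : IsBLM μ X Y θ)
    (hFpos : ∀ x : ℝ, 0 ≤ x → 0 < survival μ X x)
    (hGpos : ∀ x : ℝ, 0 ≤ x → 0 < survival μ Y x) :
    RR2 (jointSurvival μ X Y) (Ioi 0) (Ioi 0) ↔
      (ConcaveOn ℝ (Ici 0) (fun x => -Real.log (survival μ X x)) ∧
        ConcaveOn ℝ (Ici 0) (fun x => -Real.log (survival μ Y x)) ∧
        ∀ x : ℝ, 0 ≤ x → Real.exp (-θ * x) ≤ survival μ X x * survival μ Y x) :=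
  blm_survival_rr2_iff_general μ X Y θ hBLM hFpos hGpos
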